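/- Let w be a positive integer and let w_1, …, w_n be positive integers with w ≤ w_i for all 1 ≤ i ≤ n. Then in ℤ⟦t⟧ the coefficient of t^w in the product Π_{i=1}^n (1 + t^{w_i}) · (1 − t^{w_i})⁻¹ equals 2 · #{i : w_i = w}. -/

import Mathlib

open PowerSeries

/-- The local factor `(1 + t^w) · (1 - t^w)⁻¹` of the Atiyah–Singer signature
formula, as a formal power series with integer coefficients.  For `0 < w` the
series `1 - t^w` has constant coefficient `1`, hence is a unit, and
`Ring.inverse` is its genuine multiplicative inverse. -/
noncomputable def sigFactor (w : ℕ) : PowerSeries ℤ :=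
  (1 + (X : PowerSeries ℤ) ^ w) * Ring.inverse (1 - (X : PowerSeries ℤ) ^ w)

/-- The signature series `S = Σ_{p ∈ F} ε(p) · Π_{i=1}^n (1 + t^{w_p^i}) (1 - t^{w_p^i})⁻¹`
attached to a finite index set `F`, a sign function `ε`, and weights `w`. -/
noncomputable def sigSeries {F : Type} [Fintype F] {n : ℕ}
    (ε : F → ℤ) (w : F → Fin n → ℕ) : PowerSeries ℤ :=
  ∑ p : F, ε p • ∏ i : Fin n, sigFactor (w p i)

/-!
Every factor is `1 + 2 t^{wᵢ} (1 - t^{wᵢ})⁻¹ ≡ 1 (mod t^w)`. Modulo `t^{2w}`, and hence in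
degree `w`, a product of such series is `1 + ∑ (fᵢ - 1)`, so the coefficient of `t^w` is the sum
of the factors' coefficients of `t^w`: that is `2` if `wᵢ = w` and `0` if `wᵢ > w`.
-/
theorem Finset.sq_dvd_prod_sub_one_sub_sum {ι R : Type*} [CommRing R] {x : R} {f : ι → R}
    (s : Finset ι) (hf : ∀ i ∈ s, x ∣ f i - 1) :
    x ^ 2 ∣ ∏ i ∈ s, f i - 1 - ∑ i ∈ s, (f i - 1) := by
  induction s using Finset.cons_induction with
  | empty => simp
  | cons a s ha ih =>
    have hs : ∀ i ∈ s, x ∣ f i - 1 := fun i hi => hf i (Finset.mem_cons_of_mem hi)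
    have hprod : x ∣ ∏ i ∈ s, f i - 1 := by
      have := (dvd_pow_self x two_ne_zero).trans (ih hs)
      simpa using this.add (Finset.dvd_sum hs)
    rw [Finset.prod_cons, Finset.sum_cons]
    have hexpand : f a * ∏ i ∈ s, f i - 1 - (f a - 1 + ∑ i ∈ s, (f i - 1)) =
        (f a - 1) * (∏ i ∈ s, f i - 1) + (∏ i ∈ s, f i - 1 - ∑ i ∈ s, (f i - 1)) := by
      ring
    rw [hexpand, sq]
    exact (mul_dvd_mul (hf a (Finset.mem_cons_self a s)) hprod).add (sq x ▸ ih hs)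

theorem coeff_prod_eq_sum_coeff_of_X_pow_dvd {ι R : Type*} [CommRing R] {w : ℕ}
    (hw : 0 < w) {f : ι → R⟦X⟧} (s : Finset ι)
    (hf : ∀ i ∈ s, (X : R⟦X⟧) ^ w ∣ f i - 1) :
    coeff w (∏ i ∈ s, f i) = ∑ i ∈ s, coeff w (f i) := by
  have hsq : coeff w (∏ i ∈ s, f i - 1 - ∑ i ∈ s, (f i - 1)) = 0 := by
    obtain ⟨q, hq⟩ := s.sq_dvd_prod_sub_one_sub_sum hf
    rw [hq, ← pow_mul, coeff_X_pow_mul', if_neg (by omega)]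
  rw [← sub_add_cancel (∏ i ∈ s, f i) (1 + ∑ i ∈ s, (f i - 1)), sub_add_eq_sub_sub,
    map_add, hsq, map_add, map_sum]
  simp [coeff_one, hw.ne']

theorem isUnit_one_sub_X_pow {m : ℕ} (hm : 0 < m) : IsUnit (1 - (X : ℤ⟦X⟧) ^ m) := by
  rw [isUnit_iff_constantCoeff]
  simp [zero_pow hm.ne']

theorem constantCoeff_inverse_one_sub_X_pow {m : ℕ} (hm : 0 < m) :
    constantCoeff (Ring.inverse (1 - (X : ℤ⟦X⟧) ^ m)) = 1 := by
  simpa [zero_pow hm.ne'] using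
    congrArg constantCoeff (Ring.inverse_mul_cancel _ (isUnit_one_sub_X_pow hm))

theorem sigFactor_eq {m : ℕ} (hm : 0 < m) :
    sigFactor m = 1 + (X : ℤ⟦X⟧) ^ m * (2 * Ring.inverse (1 - X ^ m)) := by
  rw [sigFactor]; linear_combination Ring.mul_inverse_cancel _ (isUnit_one_sub_X_pow hm)

theorem X_pow_dvd_sigFactor_sub_one {m : ℕ} (hm : 0 < m) :
    (X : ℤ⟦X⟧) ^ m ∣ sigFactor m - 1 :=
  ⟨_, by rw [sigFactor_eq hm, add_sub_cancel_left]⟩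

theorem coeff_sigFactor_self {m : ℕ} (hm : 0 < m) : coeff m (sigFactor m) = 2 := by
  rw [sigFactor_eq hm, map_add, coeff_X_pow_mul', if_pos le_rfl, Nat.sub_self,
    coeff_zero_eq_constantCoeff_apply, map_mul, constantCoeff_inverse_one_sub_X_pow hm,
    coeff_one, if_neg hm.ne']
  rfl

theorem coeff_sigFactor_of_lt {w m : ℕ} (hw : 0 < w) (hwm : w < m) :
    coeff w (sigFactor m) = 0 := by
  have := X_pow_dvd_iff.mp (X_pow_dvd_sigFactor_sub_one (hw.trans hwm)) w hwm
  rwa [map_sub, coeff_one, if_neg hw.ne', sub_zero] at this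

theorem coeff_sigFactor_of_le {w m : ℕ} (hw : 0 < w) (hwm : w ≤ m) :
    coeff w (sigFactor m) = if m = w then 2 else 0 := by
  split_ifs with hmw
  · subst hmw
    exact coeff_sigFactor_self hw
  · exact coeff_sigFactor_of_lt hw (lt_of_le_of_ne hwm (Ne.symm hmw))

theorem stmt11_general (w : ℕ) (hw : 0 < w) {n : ℕ} (wi : Fin n → ℕ)
    (hle : ∀ i, w ≤ wi i) :
    PowerSeries.coeff w (∏ i : Fin n, sigFactor (wi i)) =
      2 * ((Finset.univ.filter fun i => wi i = w).card : ℤ) := by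
  rw [coeff_prod_eq_sum_coeff_of_X_pow_dvd hw _
      fun i _ => (pow_dvd_pow X (hle i)).trans (X_pow_dvd_sigFactor_sub_one (hw.trans_le (hle i)))]
  simp only [coeff_sigFactor_of_le hw (hle _), Finset.sum_ite, Finset.sum_const_zero, add_zero,
    Finset.sum_const, nsmul_eq_mul, mul_comm]

theorem stmt11 (w : ℕ) (hw : 0 < w) {n : ℕ} (wi : Fin n → ℕ)
    (hpos : ∀ i, 0 < wi i) (hle : ∀ i, w ≤ wi i) :
    PowerSeries.coeff w (∏ i : Fin n, sigFactor (wi i)) =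
      2 * ((Finset.univ.filter fun i => wi i = w).card : ℤ) :=
  stmt11_general w hw wi hle
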